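/- arXiv:1702.03871 — 2 statements merged into one kernel-verified Lean document; each statement's English description precedes it below -/
import Mathlib

section
/- Let 0 < R ≤ ∞ and let ψ be a quasiconcave function on [0,R). Then there exists a constant C > 0 such that (T_ψ f)**(t) ≤ C · (T_ψ f(t) + f**(t)) for every nonnegative nonincreasing measurable function f on (0,R) and every t ∈ (0,R) if and only if ψ satisfies the B-condition. -/
open MeasureTheory Set ENNReal Filter

noncomputable section

/-- The open interval `(0, R)` inside `ℝ`, where `R ∈ (0, ∞]` is an extended real. -/
def DomIoo (R : ℝ≥0∞) : Set ℝ := {t : ℝ | 0 < t ∧ ENNReal.ofReal t < R}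

/-- The part of `(0, R)` lying strictly above `t`. -/
def DomAbove (R : ℝ≥0∞) (t : ℝ) : Set ℝ := {s : ℝ | t < s ∧ ENNReal.ofReal s < R}

/-- `φ : [0, R) → [0, ∞)` is quasiconcave: it vanishes exactly at `0`, is nondecreasing,
and `t ↦ φ(t)/t` is nonincreasing on `(0, R)`.  (Values on `(0, R)` are finite.) -/
def QuasiConcaveOn (R : ℝ≥0∞) (φ : ℝ → ℝ≥0∞) : Prop :=
  φ 0 = 0 ∧
  (∀ t ∈ DomIoo R, 0 < φ t ∧ φ t < ⊤) ∧
  (∀ s t : ℝ, 0 ≤ s → s ≤ t → t ∈ DomIoo R → φ s ≤ φ t) ∧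
  (∀ s t : ℝ, s ∈ DomIoo R → s ≤ t → t ∈ DomIoo R →
    φ t / ENNReal.ofReal t ≤ φ s / ENNReal.ofReal s)

/-- `f` is a nonnegative nonincreasing measurable function on `(0, R)`
(nonnegativity is built into the codomain `[0, ∞]`). -/
def NonincOn (R : ℝ≥0∞) (f : ℝ → ℝ≥0∞) : Prop :=
  Measurable f ∧ ∀ s t : ℝ, s ∈ DomIoo R → s ≤ t → t ∈ DomIoo R → f t ≤ f s

/-- The level function `f**(t) = (1/t) ∫₀ᵗ f(s) ds`. -/
def dstar (f : ℝ → ℝ≥0∞) (t : ℝ) : ℝ≥0∞ :=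
  (∫⁻ s in Ioo (0 : ℝ) t, f s) / ENNReal.ofReal t

/-- The supremum operator `S_φ f(t) = (1/φ(t)) ⋅ sup_{0<s<t} φ(s) f(s)`. -/
def Ssup (φ f : ℝ → ℝ≥0∞) (t : ℝ) : ℝ≥0∞ :=
  (⨆ s ∈ Ioo (0 : ℝ) t, φ s * f s) / φ t

/-- The supremum operator `T_ψ f(t) = (1/ψ(t)) ⋅ sup_{t<s<R} ψ(s) f(s)`. -/
def Tsup (R : ℝ≥0∞) (ψ f : ℝ → ℝ≥0∞) (t : ℝ) : ℝ≥0∞ :=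
  (⨆ s ∈ DomAbove R t, ψ s * f s) / ψ t

/-- The `B`-condition: `∫₀ᵗ ds/φ(s) ≤ C ⋅ t/φ(t)` on `(0, R)` for some constant `C > 0`. -/
def BCond (R : ℝ≥0∞) (φ : ℝ → ℝ≥0∞) : Prop :=
  ∃ C : ℝ, 0 < C ∧ ∀ t ∈ DomIoo R,
    (∫⁻ s in Ioo (0 : ℝ) t, 1 / φ s) ≤ ENNReal.ofReal C * (ENNReal.ofReal t / φ t)

/-- A weight on `(0, R)`: positive, measurable and locally integrable
(with finite integral near the origin). -/
def IsWeight (R : ℝ≥0∞) (w : ℝ → ℝ≥0∞) : Prop :=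
  Measurable w ∧ (∀ t ∈ DomIoo R, 0 < w t ∧ w t < ⊤) ∧
  ∀ t ∈ DomIoo R, (∫⁻ s in Ioo (0 : ℝ) t, w s) < ⊤

/-- Nontriviality of a weight `w` for the exponent `p`:
`∫₁^∞ s^{-p} w(s) ds < ∞` when `R = ∞`, and `∫₀ᴿ s^{-p} w(s) ds = ∞` when `R < ∞`. -/
def Nontriv (R : ℝ≥0∞) (p : ℝ) (w : ℝ → ℝ≥0∞) : Prop :=
  (R = ⊤ → (∫⁻ s in Ioi (1 : ℝ), ENNReal.ofReal s ^ (-p) * w s) < ⊤) ∧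
  (R ≠ ⊤ → (∫⁻ s in DomIoo R, ENNReal.ofReal s ^ (-p) * w s) = ⊤)

/-!
Necessity: test the inequality on `f = ψ(a)⁻¹ · 1_{(0,a]}`. Then `T_ψ f(a) = 0`, `f**(a) ≤ 1/ψ(a)`
and `T_ψ f(s) ≥ ψ(a) f(a) / ψ(s) = 1/ψ(s)` for `s < a`, so integrating over `(0, a)` gives the
`B`-condition at `a`.

Sufficiency: for `s < t` split the supremum defining `T_ψ f(s)` at `t`. The part over `(t, R)` is
`ψ(t) T_ψ f(t)`, and the `B`-condition at `t` bounds its integral against `1/ψ` over `(0, t)` by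
`C t T_ψ f(t)`. The part over `(s, t]` is treated by the layer-cake formula: the level sets of `f`
in `(0, t]` are intervals `(0, a)`, and for the indicator of such an interval the estimate is the
`B`-condition at `a`. This gives the inequality with the constant of the `B`-condition.
-/

def BCondWith (R : ℝ≥0∞) (φ : ℝ → ℝ≥0∞) (C : ℝ) : Prop :=
  ∀ t ∈ DomIoo R, (∫⁻ s in Ioo (0 : ℝ) t, 1 / φ s) ≤ ENNReal.ofReal C * (ENNReal.ofReal t / φ t)

def TsupDstarBound (R : ℝ≥0∞) (ψ : ℝ → ℝ≥0∞) (C : ℝ) : Prop :=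
  ∀ f : ℝ → ℝ≥0∞, NonincOn R f → ∀ t ∈ DomIoo R,
    dstar (Tsup R ψ f) t ≤ ENNReal.ofReal C * (Tsup R ψ f t + dstar f t)

lemma mem_domIoo_of_le {R : ℝ≥0∞} {t u : ℝ} (ht : t ∈ DomIoo R) (hu : 0 < u) (hut : u ≤ t) :
    u ∈ DomIoo R :=
  ⟨hu, (ENNReal.ofReal_le_ofReal hut).trans_lt ht.2⟩

lemma ofReal_ne_zero_of_mem_domIoo {R : ℝ≥0∞} {t : ℝ} (ht : t ∈ DomIoo R) :
    ENNReal.ofReal t ≠ 0 :=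
  (ENNReal.ofReal_pos.2 ht.1).ne'

namespace QuasiConcaveOn

variable {R : ℝ≥0∞} {ψ : ℝ → ℝ≥0∞} {t : ℝ}

lemma ne_zero (hψ : QuasiConcaveOn R ψ) (ht : t ∈ DomIoo R) : ψ t ≠ 0 :=
  (hψ.2.1 t ht).1.ne'

lemma ne_top (hψ : QuasiConcaveOn R ψ) (ht : t ∈ DomIoo R) : ψ t ≠ ⊤ :=
  (hψ.2.1 t ht).2.ne

lemma monotoneOn_Icc (hψ : QuasiConcaveOn R ψ) (ht : t ∈ DomIoo R) :
    MonotoneOn ψ (Icc 0 t) := by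
  intro x hx y hy hxy
  rcases hy.1.eq_or_lt with rfl | hy0
  · rw [le_antisymm hxy hx.1]
  · exact hψ.2.2.1 x y hx.1 hxy (mem_domIoo_of_le ht hy0 hy.2)

lemma aemeasurable_inv (hψ : QuasiConcaveOn R ψ) (ht : t ∈ DomIoo R) :
    AEMeasurable (fun s => (ψ s)⁻¹) (volume.restrict (Ioo 0 t)) :=
  aemeasurable_restrict_of_antitoneOn measurableSet_Ioo fun _ hx _ hy hxy =>
    ENNReal.inv_le_inv.2 <|
      hψ.monotoneOn_Icc ht (Ioo_subset_Icc_self hx) (Ioo_subset_Icc_self hy) hxy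

end QuasiConcaveOn

section Necessity

variable {R : ℝ≥0∞} {ψ : ℝ → ℝ≥0∞} {a : ℝ}

lemma nonincOn_indicator_Iic (a : ℝ) (c : ℝ≥0∞) :
    NonincOn R ((Iic a).indicator fun _ => c) :=
  ⟨measurable_const.indicator measurableSet_Iic, fun s t _ hst _ => by
    by_cases h : t ∈ Iic a
    · rw [indicator_of_mem h, indicator_of_mem (show s ∈ Iic a from hst.trans h)]
    · rw [indicator_of_notMem h]
      exact zero_le⟩

lemma Tsup_indicator_Iic_self (ψ : ℝ → ℝ≥0∞) (a : ℝ) (c : ℝ≥0∞) :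
    Tsup R ψ ((Iic a).indicator fun _ => c) a = 0 := by
  have : (⨆ s ∈ DomAbove R a, ψ s * (Iic a).indicator (fun _ => c) s) = 0 :=
    le_antisymm (iSup₂_le fun s hs => by
      rw [indicator_of_notMem (show s ∉ Iic a from not_le.2 hs.1), mul_zero]) zero_le
  rw [Tsup, this, ENNReal.zero_div]

lemma dstar_indicator_Iic_le (ha : 0 < a) (c : ℝ≥0∞) :
    dstar ((Iic a).indicator fun _ => c) a ≤ c := by
  rw [dstar, ENNReal.div_le_iff (ENNReal.ofReal_pos.2 ha).ne' ENNReal.ofReal_ne_top]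
  calc (∫⁻ s in Ioo 0 a, (Iic a).indicator (fun _ => c) s) ≤ ∫⁻ _ in Ioo 0 a, c :=
        lintegral_mono (indicator_le_self _ _)
    _ = c * ENNReal.ofReal a := by rw [setLIntegral_const, Real.volume_Ioo, sub_zero]

lemma inv_le_Tsup_indicator_Iic (hψ : QuasiConcaveOn R ψ) (ha : a ∈ DomIoo R)
    {s : ℝ} (hs : s < a) :
    (ψ s)⁻¹ ≤ Tsup R ψ ((Iic a).indicator fun _ => (ψ a)⁻¹) s := by
  have hone : 1 ≤ ⨆ u ∈ DomAbove R s, ψ u * (Iic a).indicator (fun _ => (ψ a)⁻¹) u := by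
    refine le_iSup₂_of_le a ⟨hs, ha.2⟩ ?_
    rw [indicator_of_mem (mem_Iic.2 le_rfl), ENNReal.mul_inv_cancel (hψ.ne_zero ha) (hψ.ne_top ha)]
  simpa only [Tsup, one_div] using ENNReal.div_le_div_right hone (ψ s)

theorem TsupDstarBound.bCondWith (hψ : QuasiConcaveOn R ψ) {C : ℝ}
    (H : TsupDstarBound R ψ C) : BCondWith R ψ C := by
  intro a ha
  set f := (Iic a).indicator fun _ => (ψ a)⁻¹
  have hlower : (∫⁻ s in Ioo 0 a, 1 / ψ s) ≤ dstar (Tsup R ψ f) a * ENNReal.ofReal a := by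
    rw [dstar, ENNReal.div_mul_cancel (ofReal_ne_zero_of_mem_domIoo ha) ENNReal.ofReal_ne_top]
    exact setLIntegral_mono' measurableSet_Ioo fun s hs =>
      (one_div (ψ s)).trans_le (inv_le_Tsup_indicator_Iic hψ ha hs.2)
  have hupper : dstar (Tsup R ψ f) a ≤ ENNReal.ofReal C * (ψ a)⁻¹ := by
    have h := H f (nonincOn_indicator_Iic a _) a ha
    rw [Tsup_indicator_Iic_self, zero_add] at h
    exact h.trans (by gcongr; exact dstar_indicator_Iic_le ha.1 _)
  calc (∫⁻ s in Ioo 0 a, 1 / ψ s) ≤ ENNReal.ofReal C * (ψ a)⁻¹ * ENNReal.ofReal a :=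
        hlower.trans (by gcongr)
    _ = ENNReal.ofReal C * (ENNReal.ofReal a / ψ a) := by
        rw [mul_assoc, mul_comm (ψ a)⁻¹, ← div_eq_mul_inv]

end Necessity

lemma lintegral_Ioi_indicator_ofReal_lt (c x : ℝ≥0∞) :
    ∫⁻ l in Ioi (0 : ℝ), {l : ℝ | ENNReal.ofReal l < c}.indicator (fun _ => x) l = x * c := by
  rw [lintegral_indicator_const (measurableSet_lt ENNReal.measurable_ofReal measurable_const),
    Measure.restrict_apply (measurableSet_lt ENNReal.measurable_ofReal measurable_const)]
  rcases eq_or_ne c ⊤ with rfl | hc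
  · simp
  have hlevel : {l : ℝ | ENNReal.ofReal l < c} ∩ Ioi 0 = Ioo 0 c.toReal := by
    ext l
    simp only [mem_inter_iff, mem_ofPred_eq, mem_Ioi, mem_Ioo]
    exact ⟨fun h => ⟨h.2, (ENNReal.ofReal_lt_iff_lt_toReal h.2.le hc).1 h.1⟩,
      fun h => ⟨(ENNReal.ofReal_lt_iff_lt_toReal h.1.le hc).2 h.2, h.1⟩⟩
  rw [hlevel, Real.volume_Ioo, sub_zero, ENNReal.ofReal_toReal hc]

theorem lintegral_eq_lintegral_meas_ofReal_lt {α : Type*} [MeasurableSpace α] (μ : Measure α)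
    [SFinite μ] {f : α → ℝ≥0∞} (hf : Measurable f) :
    ∫⁻ u, f u ∂μ = ∫⁻ l in Ioi (0 : ℝ), μ {u | ENNReal.ofReal l < f u} := by
  have hmeas : MeasurableSet {p : α × ℝ | ENNReal.ofReal p.2 < f p.1} :=
    measurableSet_lt (ENNReal.measurable_ofReal.comp measurable_snd) (hf.comp measurable_fst)
  calc ∫⁻ u, f u ∂μ
      = ∫⁻ u, (∫⁻ l in Ioi (0 : ℝ), {l : ℝ | ENNReal.ofReal l < f u}.indicator 1 l) ∂μ := by
        exact lintegral_congr fun u => (one_mul (f u)).symm.trans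
          (lintegral_Ioi_indicator_ofReal_lt (f u) 1).symm
    _ = ∫⁻ l in Ioi (0 : ℝ), ∫⁻ u, {u | ENNReal.ofReal l < f u}.indicator 1 u ∂μ :=
        lintegral_lintegral_swap (measurable_one.indicator hmeas).aemeasurable
    _ = ∫⁻ l in Ioi (0 : ℝ), μ {u | ENNReal.ofReal l < f u} := by
        simp_rw [lintegral_indicator_one (measurableSet_lt measurable_const hf)]

/-- For nonincreasing `f`, the level set `{f > l} ∩ (0, t]` is an interval with left end `0` and
right end `levelEnd f t l` (`0` when the level set is empty). -/
def levelEnd (f : ℝ → ℝ≥0∞) (t l : ℝ) : ℝ :=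
  sSup {u ∈ Ioc 0 t | ENNReal.ofReal l < f u}

section LevelEnd

variable {R : ℝ≥0∞} {f : ℝ → ℝ≥0∞} {t l u : ℝ}

lemma levelEnd_nonneg : 0 ≤ levelEnd f t l :=
  Real.sSup_nonneg fun _ hu => hu.1.1.le

lemma levelEnd_le (ht : 0 ≤ t) : levelEnd f t l ≤ t :=
  Real.sSup_le (fun _ hu => hu.1.2) ht

lemma le_levelEnd (hu : u ∈ Ioc 0 t) (hl : ENNReal.ofReal l < f u) : u ≤ levelEnd f t l :=
  le_csSup ⟨t, fun _ hv => hv.1.2⟩ ⟨hu, hl⟩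

lemma levelEnd_antitone : Antitone (levelEnd f t) := fun _ _ hl =>
  Real.sSup_le (fun _ hu => le_levelEnd hu.1 ((ENNReal.ofReal_le_ofReal hl).trans_lt hu.2))
    levelEnd_nonneg

lemma Ioo_levelEnd_subset (hf : NonincOn R f) (ht : t ∈ DomIoo R) :
    Ioo 0 (levelEnd f t l) ⊆ {u | ENNReal.ofReal l < f u} ∩ Ioo 0 t := by
  intro u hu
  rcases eq_empty_or_nonempty {u ∈ Ioc 0 t | ENNReal.ofReal l < f u} with he | hne
  · rw [levelEnd, he, Real.sSup_empty] at hu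
    exact absurd hu.1 hu.2.not_gt
  obtain ⟨v, hv, huv⟩ := exists_lt_of_lt_csSup hne hu.2
  have hut : u ∈ Ioo 0 t := ⟨hu.1, huv.trans_le hv.1.2⟩
  refine ⟨hv.2.trans_le ?_, hut⟩
  exact hf.2 u v (mem_domIoo_of_le ht hu.1 hut.2.le) huv.le (mem_domIoo_of_le ht hv.1.1 hv.1.2)

lemma ofReal_levelEnd_le_volume (hf : NonincOn R f) (ht : t ∈ DomIoo R) :
    ENNReal.ofReal (levelEnd f t l) ≤ volume ({u | ENNReal.ofReal l < f u} ∩ Ioo 0 t) := by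
  simpa only [Real.volume_Ioo, sub_zero] using
    measure_mono (μ := volume) (Ioo_levelEnd_subset hf ht (l := l))

end LevelEnd

section Sufficiency

variable {R : ℝ≥0∞} {ψ f : ℝ → ℝ≥0∞} {t : ℝ} {C : ℝ}

lemma mul_le_lintegral_indicator_levelEnd (hψ : QuasiConcaveOn R ψ) (ht : t ∈ DomIoo R)
    {s u : ℝ} (hsu : s < u) (hu : u ∈ Ioc 0 t) :
    ψ u * f u ≤ ∫⁻ l in Ioi (0 : ℝ), (Ioi s).indicator ψ (levelEnd f t l) := by
  rw [← lintegral_Ioi_indicator_ofReal_lt]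
  refine lintegral_mono fun l => ?_
  by_cases hl : ENNReal.ofReal l < f u
  · have hua := le_levelEnd hu hl
    rw [indicator_of_mem (show l ∈ {l : ℝ | ENNReal.ofReal l < f u} from hl),
      indicator_of_mem (show levelEnd f t l ∈ Ioi s from hsu.trans_le hua)]
    exact hψ.monotoneOn_Icc ht ⟨hu.1.le, hu.2⟩ ⟨levelEnd_nonneg, levelEnd_le ht.1.le⟩ hua
  · rw [indicator_of_notMem (show l ∉ {l : ℝ | ENNReal.ofReal l < f u} from hl)]
    exact zero_le

lemma lintegral_inv_mul_indicator_levelEnd_le (hψ : QuasiConcaveOn R ψ) (hf : NonincOn R f)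
    (ht : t ∈ DomIoo R)
    (hB : BCondWith R ψ C) (l : ℝ) :
    ∫⁻ s in Ioo 0 t, (ψ s)⁻¹ * (Ioi s).indicator ψ (levelEnd f t l) ≤
      ENNReal.ofReal C * volume ({u | ENNReal.ofReal l < f u} ∩ Ioo 0 t) := by
  set a := levelEnd f t l
  have hat : a ≤ t := levelEnd_le ht.1.le
  have hslice (s : ℝ) :
      (ψ s)⁻¹ * (Ioi s).indicator ψ a = (Iio a).indicator (fun s => (ψ s)⁻¹ * ψ a) s := by
    by_cases h : s < a <;> simp [indicator, h]
  rw [lintegral_congr hslice, lintegral_indicator measurableSet_Iio,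
    Measure.restrict_restrict measurableSet_Iio, Iio_inter_Ioo, min_eq_left hat]
  rcases (levelEnd_nonneg : 0 ≤ a).eq_or_lt with h0 | h0
  · rw [show a = 0 from h0.symm, Ioo_self, Measure.restrict_empty, lintegral_zero_measure]
    exact zero_le
  have ha : a ∈ DomIoo R := mem_domIoo_of_le ht h0 hat
  calc ∫⁻ s in Ioo 0 a, (ψ s)⁻¹ * ψ a = (∫⁻ s in Ioo 0 a, (ψ s)⁻¹) * ψ a :=
        lintegral_mul_const' _ _ (hψ.ne_top ha)
    _ ≤ ENNReal.ofReal C * (ENNReal.ofReal a / ψ a) * ψ a := by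
        gcongr
        simpa only [one_div] using hB a ha
    _ = ENNReal.ofReal C * ENNReal.ofReal a := by
        rw [mul_assoc, ENNReal.div_mul_cancel (hψ.ne_zero ha) (hψ.ne_top ha)]
    _ ≤ ENNReal.ofReal C * volume ({u | ENNReal.ofReal l < f u} ∩ Ioo 0 t) := by
        gcongr
        exact ofReal_levelEnd_le_volume hf ht

lemma lintegral_inv_mul_iSup_Ioc_le (hψ : QuasiConcaveOn R ψ) (hf : NonincOn R f)
    (ht : t ∈ DomIoo R) (hB : BCondWith R ψ C) :
    ∫⁻ s in Ioo 0 t, (ψ s)⁻¹ * ⨆ u ∈ Ioc s t, ψ u * f u ≤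
      ENNReal.ofReal C * ∫⁻ u in Ioo 0 t, f u := by
  have hmeas : AEMeasurable
      (Function.uncurry fun s l => (ψ s)⁻¹ * (Ioi s).indicator ψ (levelEnd f t l))
      ((volume.restrict (Ioo 0 t)).prod (volume.restrict (Ioi 0))) := by
    have hψa : Antitone fun l => ψ (levelEnd f t l) := fun _ _ hl =>
      hψ.monotoneOn_Icc ht ⟨levelEnd_nonneg, levelEnd_le ht.1.le⟩
        ⟨levelEnd_nonneg, levelEnd_le ht.1.le⟩ (levelEnd_antitone hl)
    have hset : MeasurableSet {p : ℝ × ℝ | p.1 < levelEnd f t p.2} :=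
      measurableSet_lt measurable_fst (levelEnd_antitone.measurable.comp measurable_snd)
    exact (hψ.aemeasurable_inv ht).comp_fst.mul
      ((hψa.measurable.comp measurable_snd).indicator hset).aemeasurable
  calc ∫⁻ s in Ioo 0 t, (ψ s)⁻¹ * ⨆ u ∈ Ioc s t, ψ u * f u
      ≤ ∫⁻ s in Ioo 0 t, ∫⁻ l in Ioi (0 : ℝ), (ψ s)⁻¹ * (Ioi s).indicator ψ (levelEnd f t l) := by
        refine setLIntegral_mono' measurableSet_Ioo fun s hs => ?_
        rw [lintegral_const_mul' _ _
          (ENNReal.inv_ne_top.2 (hψ.ne_zero (mem_domIoo_of_le ht hs.1 hs.2.le)))]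
        gcongr
        exact iSup₂_le fun u hu =>
          mul_le_lintegral_indicator_levelEnd hψ ht hu.1 ⟨hs.1.trans hu.1, hu.2⟩
    _ = ∫⁻ l in Ioi (0 : ℝ), ∫⁻ s in Ioo 0 t, (ψ s)⁻¹ * (Ioi s).indicator ψ (levelEnd f t l) :=
        lintegral_lintegral_swap hmeas
    _ ≤ ∫⁻ l in Ioi (0 : ℝ), ENNReal.ofReal C * volume ({u | ENNReal.ofReal l < f u} ∩ Ioo 0 t) :=
        lintegral_mono fun l => lintegral_inv_mul_indicator_levelEnd_le hψ hf ht hB l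
    _ = ENNReal.ofReal C * ∫⁻ u in Ioo 0 t, f u := by
        rw [lintegral_const_mul' _ _ ENNReal.ofReal_ne_top,
          lintegral_eq_lintegral_meas_ofReal_lt _ hf.1]
        simp_rw [Measure.restrict_apply (measurableSet_lt measurable_const hf.1)]

lemma Tsup_le_inv_mul_add (hψ : QuasiConcaveOn R ψ) (ht : t ∈ DomIoo R) (s : ℝ) :
    Tsup R ψ f s ≤ (ψ s)⁻¹ * ((⨆ u ∈ Ioc s t, ψ u * f u) + ψ t * Tsup R ψ f t) := by
  rw [Tsup, ENNReal.div_eq_inv_mul, Tsup, ENNReal.mul_div_cancel (hψ.ne_zero ht) (hψ.ne_top ht)]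
  gcongr
  refine iSup₂_le fun u hu => ?_
  rcases le_or_gt u t with h | h
  · exact le_add_right (le_iSup₂_of_le u ⟨hu.1, h⟩ le_rfl)
  · exact le_add_left (le_iSup₂_of_le u ⟨h, hu.2⟩ le_rfl)

lemma lintegral_Tsup_le (hψ : QuasiConcaveOn R ψ) (hf : NonincOn R f) (ht : t ∈ DomIoo R)
    (hB : BCondWith R ψ C) :
    ∫⁻ s in Ioo 0 t, Tsup R ψ f s ≤
      ENNReal.ofReal C * ((∫⁻ u in Ioo 0 t, f u) + ENNReal.ofReal t * Tsup R ψ f t) := by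
  have hinv := hψ.aemeasurable_inv ht
  set M := ψ t * Tsup R ψ f t
  calc ∫⁻ s in Ioo 0 t, Tsup R ψ f s
      ≤ ∫⁻ s in Ioo 0 t, ((ψ s)⁻¹ * ⨆ u ∈ Ioc s t, ψ u * f u) + (ψ s)⁻¹ * M :=
        lintegral_mono fun s => (Tsup_le_inv_mul_add hψ ht s).trans_eq (mul_add _ _ _)
    _ = (∫⁻ s in Ioo 0 t, (ψ s)⁻¹ * ⨆ u ∈ Ioc s t, ψ u * f u) +
          (∫⁻ s in Ioo 0 t, (ψ s)⁻¹) * M := by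
        rw [lintegral_add_right' _ (hinv.mul_const M), lintegral_mul_const'' _ hinv]
    _ ≤ ENNReal.ofReal C * (∫⁻ u in Ioo 0 t, f u) +
          ENNReal.ofReal C * (ENNReal.ofReal t / ψ t) * M := by
        gcongr
        · exact lintegral_inv_mul_iSup_Ioc_le hψ hf ht hB
        · simpa only [one_div] using hB t ht
    _ = ENNReal.ofReal C * ((∫⁻ u in Ioo 0 t, f u) + ENNReal.ofReal t * Tsup R ψ f t) := by
        rw [mul_assoc, ← mul_assoc _ (ψ t), ENNReal.div_mul_cancel (hψ.ne_zero ht) (hψ.ne_top ht),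
          mul_add]

theorem BCondWith.tsupDstarBound (hψ : QuasiConcaveOn R ψ) (hB : BCondWith R ψ C) :
    TsupDstarBound R ψ C := by
  intro f hf t ht
  have ht₀ := ofReal_ne_zero_of_mem_domIoo ht
  rw [dstar, ENNReal.div_le_iff ht₀ ENNReal.ofReal_ne_top]
  refine (lintegral_Tsup_le hψ hf ht hB).trans_eq ?_
  rw [dstar, mul_assoc, add_mul, ENNReal.div_mul_cancel ht₀ ENNReal.ofReal_ne_top, add_comm,
    mul_comm (Tsup R ψ f t)]

end Sufficiency

theorem statement7_general (R : ℝ≥0∞) (ψ : ℝ → ℝ≥0∞)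
    (hψ : QuasiConcaveOn R ψ) :
    (∃ C : ℝ, 0 < C ∧ ∀ f : ℝ → ℝ≥0∞, NonincOn R f → ∀ t ∈ DomIoo R,
        dstar (Tsup R ψ f) t ≤ ENNReal.ofReal C * (Tsup R ψ f t + dstar f t)) ↔
      BCond R ψ := by
  constructor
  · rintro ⟨C, hC, H⟩
    exact ⟨C, hC, TsupDstarBound.bCondWith hψ H⟩
  · rintro ⟨C, hC, hB⟩
    exact ⟨C, hC, BCondWith.tsupDstarBound hψ hB⟩

/-- `(T_ψ f)** ≲ T_ψ f + f**` holds for all nonneg. nonincreasing `f` iff `ψ ∈ B`. -/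
theorem statement7 (R : ℝ≥0∞) (hR : 0 < R) (ψ : ℝ → ℝ≥0∞)
    (hψ : QuasiConcaveOn R ψ) :
    (∃ C : ℝ, 0 < C ∧ ∀ f : ℝ → ℝ≥0∞, NonincOn R f → ∀ t ∈ DomIoo R,
        dstar (Tsup R ψ f) t ≤ ENNReal.ofReal C * (Tsup R ψ f t + dstar f t)) ↔
      BCond R ψ :=
  statement7_general R ψ hψ
end
end

section
/- Let 0 < R ≤ ∞ and let φ be a quasiconcave function on [0,R). Then there exists a constant C > 0 such that (S_φ f)**(t) ≤ C · S_φ(f**)(t) for every nonnegative nonincreasing measurable function f on (0,R) and every t ∈ (0,R) if and only if φ satisfies the B-condition. -/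
open MeasureTheory Set ENNReal Filter

noncomputable section

/-! Testing the inequality on `f = 1_(0,a]` with `0 < a < t` gives `S_φ f ≥ φ(a)/φ` on `(a,t)`,
while quasiconcavity gives `φ(s) f**(s) ≤ φ(a)`, i.e. `S_φ(f**)(t) ≤ φ(a)/φ(t)`; hence
`∫ₐᵗ 1/φ ≤ C t/φ(t)`, and letting `a ↓ 0` yields the B-condition. Conversely `f ≤ f**` for
nonincreasing `f`, so `S_φ f(s) ≤ φ(t) S_φ(f**)(t)/φ(s)` for `s < t`, and integrating `1/φ` over
`(0,t)` with the B-condition gives the inequality with the same constant. -/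

lemma mem_domIoo_of_mem_Ioo {R : ℝ≥0∞} {s t : ℝ} (ht : t ∈ DomIoo R) (hs : s ∈ Ioo 0 t) :
    s ∈ DomIoo R :=
  ⟨hs.1, (ENNReal.ofReal_le_ofReal hs.2.le).trans_lt ht.2⟩

lemma setLIntegral_Ioo_le_of_forall_Ioo_le {g : ℝ → ℝ≥0∞} {a b : ℝ} {M : ℝ≥0∞}
    (h : ∀ c ∈ Ioo a b, ∫⁻ x in Ioo c b, g x ≤ M) : ∫⁻ x in Ioo a b, g x ≤ M := by
  have hmono : Monotone fun n : ℕ => Ioo (a + 1 / (n + 1)) b := fun m n hmn =>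
    Ioo_subset_Ioo_left (add_le_add_right (Nat.one_div_le_one_div hmn) a)
  have hunion : Ioo a b = ⋃ n : ℕ, Ioo (a + 1 / (n + 1)) b := by
    ext x
    simp only [mem_Ioo, mem_iUnion]
    constructor
    · rintro ⟨hax, hxb⟩
      obtain ⟨n, hn⟩ := exists_nat_one_div_lt (sub_pos.2 hax)
      exact ⟨n, by linarith, hxb⟩
    · rintro ⟨n, hnx, hxb⟩
      exact ⟨(lt_add_of_pos_right a Nat.one_div_pos_of_nat).trans hnx, hxb⟩
  rw [hunion, setLIntegral_iUnion_of_directed _ hmono.directed_le]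
  refine iSup_le fun n => ?_
  rcases lt_or_ge (a + 1 / (n + 1)) b with hlt | hge
  · exact h _ ⟨lt_add_of_pos_right a Nat.one_div_pos_of_nat, hlt⟩
  · simp only [Ioo_eq_empty_of_le hge, Measure.restrict_empty, lintegral_zero_measure, zero_le]

lemma le_dstar_of_forall_le {f : ℝ → ℝ≥0∞} {u : ℝ} (hu : 0 < u)
    (hf : ∀ v ∈ Ioo 0 u, f u ≤ f v) : f u ≤ dstar f u := by
  have hconst : f u * ENNReal.ofReal u ≤ ∫⁻ v in Ioo 0 u, f v :=
    calc f u * ENNReal.ofReal u = ∫⁻ _ in Ioo 0 u, f u := by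
          rw [setLIntegral_const, Real.volume_Ioo, sub_zero]
      _ ≤ ∫⁻ v in Ioo 0 u, f v := setLIntegral_mono_ae' measurableSet_Ioo (ae_of_all _ hf)
  exact (ENNReal.le_div_iff_mul_le (Or.inl (ENNReal.ofReal_pos.2 hu).ne')
    (Or.inl ENNReal.ofReal_ne_top)).2 hconst

lemma Ssup_le_iSup_div {φ f g : ℝ → ℝ≥0∞} {s t : ℝ} (hst : s ≤ t)
    (hfg : ∀ u ∈ Ioo 0 s, f u ≤ g u) :
    Ssup φ f s ≤ (⨆ u ∈ Ioo 0 t, φ u * g u) / φ s :=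
  ENNReal.div_le_div_right (iSup₂_le fun u hu =>
    (mul_le_mul_right (hfg u hu) _).trans
      (le_iSup₂ (f := fun u (_ : u ∈ Ioo 0 t) => φ u * g u) u ⟨hu.1, hu.2.trans_le hst⟩)) _

lemma dstar_Ssup_le_of_setLIntegral_inv_le {R : ℝ≥0∞} {φ f : ℝ → ℝ≥0∞} {t C : ℝ} (hC : 0 < C)
    (ht : t ∈ DomIoo R) (hφt : φ t ≠ ⊤) (hf : NonincOn R f)
    (hB : ∫⁻ s in Ioo 0 t, 1 / φ s ≤ ENNReal.ofReal C * (ENNReal.ofReal t / φ t)) :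
    dstar (Ssup φ f) t ≤ ENNReal.ofReal C * Ssup φ (dstar f) t := by
  set A := ⨆ u ∈ Ioo 0 t, φ u * dstar f u
  change _ ≤ _ * (A / φ t)
  rcases eq_or_ne A ⊤ with hA | hA
  · rw [hA, ENNReal.top_div_of_ne_top hφt, ENNReal.mul_top (ENNReal.ofReal_pos.2 hC).ne']
    exact le_top
  have hpt : ∀ s ∈ Ioo 0 t, Ssup φ f s ≤ A * (1 / φ s) := fun s hs => by
    rw [← mul_div_assoc, mul_one]
    refine Ssup_le_iSup_div hs.2.le fun u hu => le_dstar_of_forall_le hu.1 fun v hv => ?_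
    have hu' : u ∈ Ioo 0 t := ⟨hu.1, hu.2.trans hs.2⟩
    exact hf.2 v u (mem_domIoo_of_mem_Ioo ht ⟨hv.1, hv.2.trans hu'.2⟩) hv.2.le
      (mem_domIoo_of_mem_Ioo ht hu')
  have ht0 : ENNReal.ofReal t ≠ 0 := (ENNReal.ofReal_pos.2 ht.1).ne'
  calc dstar (Ssup φ f) t
      ≤ (∫⁻ s in Ioo 0 t, A * (1 / φ s)) / ENNReal.ofReal t :=
        ENNReal.div_le_div_right (setLIntegral_mono_ae' measurableSet_Ioo (ae_of_all _ hpt)) _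
    _ = A * (∫⁻ s in Ioo 0 t, 1 / φ s) / ENNReal.ofReal t := by
        rw [lintegral_const_mul' A _ hA]
    _ ≤ A * (ENNReal.ofReal C * (ENNReal.ofReal t / φ t)) / ENNReal.ofReal t := by gcongr
    _ = ENNReal.ofReal C * (A / φ t) := by
        rw [show A * (ENNReal.ofReal C * (ENNReal.ofReal t / φ t)) =
            ENNReal.ofReal C * (A / φ t) * ENNReal.ofReal t by simp only [div_eq_mul_inv]; ring,
          ENNReal.mul_div_cancel_right ht0 ENNReal.ofReal_ne_top]

lemma nonincOn_indicator_Ioc (R : ℝ≥0∞) (a : ℝ) : NonincOn R ((Ioc 0 a).indicator 1) := by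
  refine ⟨measurable_one.indicator measurableSet_Ioc, fun s u hs hsu _ => ?_⟩
  by_cases hu : u ∈ Ioc 0 a
  · rw [indicator_of_mem hu, indicator_of_mem (show s ∈ Ioc (0 : ℝ) a from ⟨hs.1, hsu.trans hu.2⟩)]
    rfl
  · rw [indicator_of_notMem hu]
    exact zero_le

lemma div_le_Ssup_indicator_Ioc {φ : ℝ → ℝ≥0∞} {a s : ℝ} (ha : 0 < a) (has : a < s) :
    φ a / φ s ≤ Ssup φ ((Ioc 0 a).indicator 1) s := by
  refine ENNReal.div_le_div_right ?_ _
  have := le_iSup₂ (f := fun u (_ : u ∈ Ioo 0 s) => φ u * (Ioc 0 a).indicator 1 u) a ⟨ha, has⟩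
  rwa [indicator_of_mem (show a ∈ Ioc 0 a from ⟨ha, le_rfl⟩), Pi.one_apply, mul_one] at this

lemma mul_dstar_indicator_Ioc_le {R : ℝ≥0∞} {φ : ℝ → ℝ≥0∞} (hφ : QuasiConcaveOn R φ) {a s : ℝ}
    (ha : a ∈ DomIoo R) (hs : s ∈ DomIoo R) :
    φ s * dstar ((Ioc 0 a).indicator 1) s ≤ φ a := by
  have hint : ∫⁻ x in Ioo 0 s, (Ioc 0 a).indicator 1 x = volume (Ioc 0 a ∩ Ioo 0 s) := by
    rw [lintegral_indicator_one measurableSet_Ioc, Measure.restrict_apply measurableSet_Ioc]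
  have hs0 : ENNReal.ofReal s ≠ 0 := (ENNReal.ofReal_pos.2 hs.1).ne'
  rcases le_or_gt s a with hsa | has
  · have hle : dstar ((Ioc 0 a).indicator 1) s ≤ 1 := by
      rw [dstar, hint, ENNReal.div_le_iff hs0 ENNReal.ofReal_ne_top, one_mul]
      exact (measure_mono inter_subset_right).trans_eq (by rw [Real.volume_Ioo, sub_zero])
    calc φ s * dstar ((Ioc 0 a).indicator 1) s ≤ φ s * 1 := by gcongr
      _ ≤ φ a := by rw [mul_one]; exact hφ.2.2.1 s a hs.1.le hsa ha
  · have hle : dstar ((Ioc 0 a).indicator 1) s ≤ ENNReal.ofReal a / ENNReal.ofReal s := by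
      rw [dstar, hint]
      exact ENNReal.div_le_div_right
        ((measure_mono inter_subset_left).trans_eq (by rw [Real.volume_Ioc, sub_zero])) _
    have ha0 : ENNReal.ofReal a ≠ 0 := (ENNReal.ofReal_pos.2 ha.1).ne'
    calc φ s * dstar ((Ioc 0 a).indicator 1) s
        ≤ φ s * (ENNReal.ofReal a / ENNReal.ofReal s) := by gcongr
      _ = ENNReal.ofReal a * (φ s / ENNReal.ofReal s) := by simp only [div_eq_mul_inv]; ring
      _ ≤ ENNReal.ofReal a * (φ a / ENNReal.ofReal a) :=
          mul_le_mul_right (hφ.2.2.2 a s ha has.le hs) _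
      _ = φ a := ENNReal.mul_div_cancel ha0 ENNReal.ofReal_ne_top

lemma Ssup_dstar_indicator_Ioc_le {R : ℝ≥0∞} {φ : ℝ → ℝ≥0∞} (hφ : QuasiConcaveOn R φ)
    {a t : ℝ} (ht : t ∈ DomIoo R) (ha : a ∈ Ioo 0 t) :
    Ssup φ (dstar ((Ioc 0 a).indicator 1)) t ≤ φ a / φ t := by
  refine ENNReal.div_le_div_right (iSup₂_le fun s hs => ?_) _
  exact mul_dstar_indicator_Ioc_le hφ (mem_domIoo_of_mem_Ioo ht ha) (mem_domIoo_of_mem_Ioo ht hs)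

lemma setLIntegral_Ioo_inv_le_of_indicator_Ioc {R : ℝ≥0∞} {φ : ℝ → ℝ≥0∞}
    (hφ : QuasiConcaveOn R φ) {a t C : ℝ} (ht : t ∈ DomIoo R) (ha : a ∈ Ioo 0 t)
    (h : dstar (Ssup φ ((Ioc 0 a).indicator 1)) t ≤
      ENNReal.ofReal C * Ssup φ (dstar ((Ioc 0 a).indicator 1)) t) :
    ∫⁻ s in Ioo a t, 1 / φ s ≤ ENNReal.ofReal C * (ENNReal.ofReal t / φ t) := by
  obtain ⟨hφa0, hφa⟩ := hφ.2.1 a (mem_domIoo_of_mem_Ioo ht ha)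
  refine (ENNReal.mul_le_mul_iff_right hφa0.ne' hφa.ne).1 ?_
  calc φ a * ∫⁻ s in Ioo a t, 1 / φ s
      = ∫⁻ s in Ioo a t, φ a / φ s := by
        rw [← lintegral_const_mul' _ _ hφa.ne]; simp only [mul_one_div]
    _ ≤ ∫⁻ s in Ioo 0 t, Ssup φ ((Ioc 0 a).indicator 1) s :=
        (setLIntegral_mono_ae' measurableSet_Ioo
          (ae_of_all _ fun s hs => div_le_Ssup_indicator_Ioc ha.1 hs.1)).trans
        (lintegral_mono_set (Ioo_subset_Ioo_left ha.1.le))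
    _ = dstar (Ssup φ ((Ioc 0 a).indicator 1)) t * ENNReal.ofReal t :=
        (ENNReal.div_mul_cancel (ENNReal.ofReal_pos.2 ht.1).ne' ENNReal.ofReal_ne_top).symm
    _ ≤ ENNReal.ofReal C * (φ a / φ t) * ENNReal.ofReal t := by
        grw [h, Ssup_dstar_indicator_Ioc_le hφ ht ha]
    _ = φ a * (ENNReal.ofReal C * (ENNReal.ofReal t / φ t)) := by
        simp only [div_eq_mul_inv]; ring

theorem statement9_general (R : ℝ≥0∞) (φ : ℝ → ℝ≥0∞)
    (hφ : QuasiConcaveOn R φ) :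
    (∃ C : ℝ, 0 < C ∧ ∀ f : ℝ → ℝ≥0∞, NonincOn R f → ∀ t ∈ DomIoo R,
        dstar (Ssup φ f) t ≤ ENNReal.ofReal C * Ssup φ (dstar f) t) ↔
      BCond R φ := by
  constructor
  · rintro ⟨C, hC, H⟩
    refine ⟨C, hC, fun t ht => setLIntegral_Ioo_le_of_forall_Ioo_le fun a ha => ?_⟩
    exact setLIntegral_Ioo_inv_le_of_indicator_Ioc hφ ht ha
      (H _ (nonincOn_indicator_Ioc R a) t ht)
  · rintro ⟨C, hC, hB⟩
    exact ⟨C, hC, fun f hf t ht =>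
      dstar_Ssup_le_of_setLIntegral_inv_le hC ht (hφ.2.1 t ht).2.ne hf (hB t ht)⟩

/-- `(S_φ f)** ≲ S_φ(f**)` holds for all nonneg. nonincreasing `f` iff `φ ∈ B`. -/
theorem statement9 (R : ℝ≥0∞) (hR : 0 < R) (φ : ℝ → ℝ≥0∞)
    (hφ : QuasiConcaveOn R φ) :
    (∃ C : ℝ, 0 < C ∧ ∀ f : ℝ → ℝ≥0∞, NonincOn R f → ∀ t ∈ DomIoo R,
        dstar (Ssup φ f) t ≤ ENNReal.ofReal C * Ssup φ (dstar f) t) ↔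
      BCond R φ :=
  statement9_general R φ hφ
end
end
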